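/- Consider the skeptical aggregation operator so on an argumentation framework AF = ⟨𝒜, ⇀⟩, and agents 1,…,n each having the Hamming set based preference ⪰_{i,⊖}, where agent i's most preferred labeling is the complete labeling ℒᵢ. Let P = (ℒ₁,…,ℒₙ) be the sincere profile, let k be an agent and ℒ'ₖ a labeling, and let P' be P with ℒₖ replaced by ℒ'ₖ; suppose so(P) and so(P') exist. If ℒ'ₖ is a strategic lie for agent k, i.e. so(P') ≻_{k,⊖} so(P), then the lie is benevolent: so(P') ⪰_{i,⊖} so(P) for every agent i, and so(P') ≻_{j,⊖} so(P) for some agent j ≠ k. -/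
import Mathlib


/- Labels for arguments: in, out, undec -/
inductive Lab where
  | IN : Lab
  | OUT : Lab
  | UNDEC : Lab
deriving DecidableEq

variable {A : Type}

/-- Arguments labeled `in` by a labeling. -/
def labIn (L : A → Lab) : Set A := {a | L a = Lab.IN}
/-- Arguments labeled `out` by a labeling. -/
def labOut (L : A → Lab) : Set A := {a | L a = Lab.OUT}
/-- Arguments labeled `undec` by a labeling. -/
def labUndec (L : A → Lab) : Set A := {a | L a = Lab.UNDEC}
/-- Decided arguments: labeled `in` or `out`. -/
def labDec (L : A → Lab) : Set A := labIn L ∪ labOut L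

/-- Admissible labeling with respect to a defeat relation `df` (`df b a` : b defeats a). -/
def Admissible (df : A → A → Prop) (L : A → Lab) : Prop :=
  ∀ a : A,
    (L a = Lab.IN → ∀ b : A, df b a → L b = Lab.OUT) ∧
    (L a = Lab.OUT → ∃ b : A, df b a ∧ L b = Lab.IN)

/-- Complete labeling. -/
def Complete (df : A → A → Prop) (L : A → Lab) : Prop :=
  Admissible df L ∧
  ∀ a : A, L a = Lab.UNDEC →
    ¬ (∀ b : A, df b a → L b = Lab.OUT) ∧ ¬ (∃ b : A, df b a ∧ L b = Lab.IN)

/-- `L1 ⊑ L2` : less or equally committed. -/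
def LabLeq (L1 L2 : A → Lab) : Prop := labIn L1 ⊆ labIn L2 ∧ labOut L1 ⊆ labOut L2

/-- `L1 ≈ L2` : compatible labelings. -/
def LabCompatible (L1 L2 : A → Lab) : Prop :=
  labIn L1 ∩ labOut L2 = ∅ ∧ labOut L1 ∩ labIn L2 = ∅

/-- Hamming set `L1 ⊖ L2`. -/
def hamSet (L1 L2 : A → Lab) : Set A := {a | L1 a ≠ L2 a}
/-- Hamming distance `L1 |⊖| L2`. -/
noncomputable def hamDist (L1 L2 : A → Lab) : ℕ := (hamSet L1 L2).ncard

/-- in–out Hamming set `L1 ⊖ⁱᵒ L2`. -/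
def ioSet (L1 L2 : A → Lab) : Set A :=
  {a | (L1 a = Lab.IN ∧ L2 a = Lab.OUT) ∨ (L1 a = Lab.OUT ∧ L2 a = Lab.IN)}
/-- dec–undec Hamming set `L1 ⊖ᵈᵘ L2`. -/
def duSet (L1 L2 : A → Lab) : Set A :=
  {a | (a ∈ labDec L1 ∧ L2 a = Lab.UNDEC) ∨ (L1 a = Lab.UNDEC ∧ a ∈ labDec L2)}
/-- IUO Hamming sets `L1 ⊖ᴹ L2` as a pair. -/
def iuoSets (L1 L2 : A → Lab) : Set A × Set A := (ioSet L1 L2, duSet L1 L2)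
/-- Componentwise inclusion on pairs of sets. -/
def PairSub {α : Type} (p q : Set α × Set α) : Prop := p.1 ⊆ q.1 ∧ p.2 ⊆ q.2
/-- IUO Hamming distance `L1 |⊖ᴹ| L2`. -/
noncomputable def iuoDist (L1 L2 : A → Lab) : ℕ :=
  2 * (ioSet L1 L2).ncard + (duSet L1 L2).ncard

/-- Two arguments are in-sync (with respect to the complete labelings of the framework). -/
def InSync (df : A → A → Prop) (a b : A) : Prop :=
  (∀ L : A → Lab, Complete df L → L a = L b) ∨
  (∀ L : A → Lab, Complete df L →
    (L a = Lab.IN ↔ L b = Lab.OUT) ∧ (L a = Lab.OUT ↔ L b = Lab.IN))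

/-- An issue: an equivalence class of the in-sync relation. -/
def IsIssue (df : A → A → Prop) (B : Set A) : Prop :=
  ∃ a : A, B = {b | InSync df a b}

/-- Issue-wise set `L1 ⊖_W L2`. -/
def iwSet (df : A → A → Prop) (L1 L2 : A → Lab) : Set (Set A) :=
  {B | IsIssue df B ∧ ∃ a ∈ B, L1 a ≠ L2 a}
/-- Issue-wise distance `L1 |⊖_W| L2`. -/
noncomputable def iwDist (df : A → A → Prop) (L1 L2 : A → Lab) : ℕ := (iwSet df L1 L2).ncard

/-- in–out Issue-wise set `L1 ⊖_Wⁱᵒ L2`. -/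
def iwIoSet (df : A → A → Prop) (L1 L2 : A → Lab) : Set (Set A) :=
  {B | IsIssue df B ∧ ∃ a ∈ B, a ∈ ioSet L1 L2}
/-- dec–undec Issue-wise set `L1 ⊖_Wᵈᵘ L2`. -/
def iwDuSet (df : A → A → Prop) (L1 L2 : A → Lab) : Set (Set A) :=
  {B | IsIssue df B ∧ ∃ a ∈ B, a ∈ duSet L1 L2}
/-- IUO Issue-wise sets `L1 ⊖_Wᴹ L2` as a pair. -/
def iwIuoSets (df : A → A → Prop) (L1 L2 : A → Lab) : Set (Set A) × Set (Set A) :=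
  (iwIoSet df L1 L2, iwDuSet df L1 L2)
/-- IUO Issue-wise distance `L1 |⊖_Wᴹ| L2`. -/
noncomputable def iwIuoDist (df : A → A → Prop) (L1 L2 : A → Lab) : ℕ :=
  2 * (iwIoSet df L1 L2).ncard + (iwDuSet df L1 L2).ncard

/- Preferences: `pref Li L L'` means `L ⪰ L'` for an agent whose most preferred labeling is `Li`. -/
/-- Hamming set based preference `⪰_{i,⊖}`. -/
def hamSetPref (Li L L' : A → Lab) : Prop := hamSet L Li ⊆ hamSet L' Li
/-- Hamming distance based preference `⪰_{i,|⊖|}`. -/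
def hamDistPref (Li L L' : A → Lab) : Prop := hamDist L Li ≤ hamDist L' Li
/-- IUO Hamming sets based preference `⪰_{i,⊖ᴹ}`. -/
def iuoSetPref (Li L L' : A → Lab) : Prop := PairSub (iuoSets L Li) (iuoSets L' Li)
/-- IUO Hamming distance based preference `⪰_{i,|⊖ᴹ|}`. -/
def iuoDistPref (Li L L' : A → Lab) : Prop := iuoDist L Li ≤ iuoDist L' Li
/-- Issue-wise set based preference `⪰_{i,⊖_W}`. -/
def iwSetPref (df : A → A → Prop) (Li L L' : A → Lab) : Prop := iwSet df L Li ⊆ iwSet df L' Li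
/-- Issue-wise distance based preference `⪰_{i,|⊖_W|}`. -/
def iwDistPref (df : A → A → Prop) (Li L L' : A → Lab) : Prop := iwDist df L Li ≤ iwDist df L' Li
/-- IUO Issue-wise sets based preference `⪰_{i,⊖_Wᴹ}`. -/
def iwIuoSetPref (df : A → A → Prop) (Li L L' : A → Lab) : Prop :=
  PairSub (iwIuoSets df L Li) (iwIuoSets df L' Li)
/-- IUO Issue-wise distance based preference `⪰_{i,|⊖_Wᴹ|}`. -/
def iwIuoDistPref (df : A → A → Prop) (Li L L' : A → Lab) : Prop :=
  iwIuoDist df L Li ≤ iwIuoDist df L' Li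

/-- Strict part of a preference relation. -/
def StrictPref (pref : (A → Lab) → (A → Lab) → Prop) (L L' : A → Lab) : Prop :=
  pref L L' ∧ ¬ pref L' L

/-- `L'` Pareto dominates `L` with respect to the profile of preference relations `pref`. -/
def Dominates {ι : Type} (pref : ι → (A → Lab) → (A → Lab) → Prop) (L' L : A → Lab) : Prop :=
  (∀ i : ι, pref i L' L) ∧ ∃ j : ι, StrictPref (pref j) L' L

/-- `L` is Pareto optimal in `S`: no element of `S` Pareto dominates `L`. -/
def ParetoOptimalIn {ι : Type} (pref : ι → (A → Lab) → (A → Lab) → Prop)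
    (S : Set (A → Lab)) (L : A → Lab) : Prop :=
  ∀ L' ∈ S, ¬ Dominates pref L' L

/-- `LSO` is the skeptical outcome of profile `P`: the greatest admissible labeling below the
profile. -/
def IsSkeptical {n : ℕ} (df : A → A → Prop) (P : Fin n → (A → Lab)) (LSO : A → Lab) : Prop :=
  Admissible df LSO ∧ (∀ i : Fin n, LabLeq LSO (P i)) ∧
  ∀ L : A → Lab, Admissible df L → (∀ i : Fin n, LabLeq L (P i)) → LabLeq L LSO

/-- `LC` is the credulous initial outcome of the profile `P`. -/
def IsCio {n : ℕ} (P : Fin n → (A → Lab)) (LC : A → Lab) : Prop :=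
  ∀ a : A,
    (LC a = Lab.IN ↔ (∃ i : Fin n, P i a = Lab.IN) ∧ ∀ j : Fin n, P j a ≠ Lab.OUT) ∧
    (LC a = Lab.OUT ↔ (∃ i : Fin n, P i a = Lab.OUT) ∧ ∀ j : Fin n, P j a ≠ Lab.IN)

/-- `LCO` is the credulous outcome of `P`: the greatest admissible labeling `⊑ cio(P)`. -/
def IsCredulous {n : ℕ} (df : A → A → Prop) (P : Fin n → (A → Lab)) (LCO : A → Lab) : Prop :=
  ∃ LCIO : A → Lab, IsCio P LCIO ∧ Admissible df LCO ∧ LabLeq LCO LCIO ∧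
    ∀ L : A → Lab, Admissible df L → LabLeq L LCIO → LabLeq L LCO

/-- `LSCO` is the super credulous outcome of `P` given credulous outcome `LCO`:
the least complete labeling above `LCO`. -/
def IsSuperCredulousOf (df : A → A → Prop) (LCO LSCO : A → Lab) : Prop :=
  Complete df LSCO ∧ LabLeq LCO LSCO ∧
    ∀ L : A → Lab, Complete df L → LabLeq LCO L → LabLeq LSCO L

/-- If `L1 ⊑ L2` and `L1` decides `a`, then `L2 a = L1 a`. -/
lemma leq_point {A : Type} {L1 L2 : A → Lab} (h : LabLeq L1 L2) (a : A)
    (hd : L1 a ≠ Lab.UNDEC) : L2 a = L1 a := by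
  cases hL : L1 a with
  | IN => exact h.1 hL
  | OUT => exact h.2 hL
  | UNDEC => exact absurd hL hd

/-- with the skeptical operator and Hamming set based preferences, every
strategic lie is benevolent. -/
theorem skeptical_lies_benevolent_hamSet {A : Type} [Fintype A] {n : ℕ}
    (df : A → A → Prop) (P : Fin n → (A → Lab)) (hP : ∀ i : Fin n, Complete df (P i))
    (k : Fin n) (L'k : A → Lab) (LSO L'SO : A → Lab)
    (hSO : IsSkeptical df P LSO)
    (hSO' : IsSkeptical df (Function.update P k L'k) L'SO)
    (hlie : StrictPref (hamSetPref (P k)) L'SO LSO) :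
    (∀ i : Fin n, hamSetPref (P i) L'SO LSO) ∧
    ∃ j : Fin n, j ≠ k ∧ StrictPref (hamSetPref (P j)) L'SO LSO := by
  have hLk : LabLeq LSO (P k) := hSO.2.1 k
  have hsub : hamSet L'SO (P k) ⊆ hamSet LSO (P k) := hlie.1
  -- key: L'SO agrees with LSO on everything LSO decides
  have key : ∀ a : A, LSO a ≠ Lab.UNDEC → L'SO a = LSO a := by
    intro a ha
    have hk : P k a = LSO a := leq_point hLk a ha
    by_contra hne
    have hmem : a ∈ hamSet L'SO (P k) := by
      show L'SO a ≠ P k a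
      rw [hk]; exact hne
    have : LSO a ≠ P k a := hsub hmem
    exact this hk.symm
  -- leq of L'SO with respect to other agents
  have h'leq : ∀ i : Fin n, i ≠ k → LabLeq L'SO (P i) := by
    intro i hik
    have h := hSO'.2.1 i
    rwa [Function.update_of_ne hik] at h
  -- Pareto part
  have pref_all : ∀ i : Fin n, hamSetPref (P i) L'SO LSO := by
    intro i
    by_cases hik : i = k
    · subst hik; exact hsub
    · intro a ha
      have hai : L'SO a ≠ P i a := ha
      have hu : L'SO a = Lab.UNDEC := by
        by_contra h
        exact hai (leq_point (h'leq i hik) a h).symm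
      have hLu : LSO a = Lab.UNDEC := by
        by_contra h
        have := key a h
        rw [this] at hu
        exact h hu
      show LSO a ≠ P i a
      rw [hLu]
      rw [hu] at hai
      exact hai
  refine ⟨pref_all, ?_⟩
  -- witness of strictness at k
  obtain ⟨a0, ha0, ha0'⟩ : ∃ a0, a0 ∈ hamSet LSO (P k) ∧ a0 ∉ hamSet L'SO (P k) :=
    Set.not_subset.mp hlie.2
  have h1 : LSO a0 ≠ P k a0 := ha0
  have h2 : L'SO a0 = P k a0 := not_not.mp ha0'
  have hLu0 : LSO a0 = Lab.UNDEC := by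
    by_contra h
    exact h1 (leq_point hLk a0 h).symm
  have hdec : L'SO a0 ≠ Lab.UNDEC := by
    rw [h2]
    intro h
    exact h1 (by rw [h, hLu0])
  by_cases hall : ∀ j : Fin n, j = k
  · -- then LSO = P k, contradicting strictness
    exfalso
    have hmax : LabLeq (P k) LSO := by
      apply hSO.2.2 (P k) (hP k).1
      intro i
      rw [hall i]
      exact ⟨fun _ h => h, fun _ h => h⟩
    apply h1
    rw [hLu0]
    cases hpk : P k a0 with
    | IN =>
      have h : LSO a0 = Lab.IN := hmax.1 hpk
      rw [hLu0] at h
      exact absurd h (by decide)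
    | OUT =>
      have h : LSO a0 = Lab.OUT := hmax.2 hpk
      rw [hLu0] at h
      exact absurd h (by decide)
      | UNDEC => rfl
  · push_neg at hall
    obtain ⟨j, hjk⟩ := hall
    refine ⟨j, hjk, pref_all j, ?_⟩
    intro hback
    have hja : P j a0 = L'SO a0 := leq_point (h'leq j hjk) a0 hdec
    have : a0 ∈ hamSet LSO (P j) := by
      show LSO a0 ≠ P j a0
      rw [hLu0, hja]
      exact fun h => hdec h.symm
    have : L'SO a0 ≠ P j a0 := hback this
    exact this hja.symm
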